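/- arXiv:1111.5926 — 3 statements merged into one kernel-verified Lean document; each statement's English description precedes it below -/
import Mathlib

section
/- Under the assumptions of the previous block decomposition, with M positive definite and K₁, K_e positive semidefinite, a pair (v,u) lies in the kernel of the block matrix A = [[αM + K₁, K₁],[K₁, K₁ + K_e]] if and only if v = 0, K₁ u = 0 and K_e u = 0. In particular, if ker K₁ ∩ ker K_e consists only of constant vectors, the discrete bidomain solution (V_m, u_e) is unique up to adding a constant to u_e. -/
open Matrix

/-!
Pairing `A (v, u)` with `(v, u)` gives `α v·Mv + (v + u)·K₁(v + u) + u·K_e u`, a sum of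
nonnegative terms. For a kernel vector all three vanish: positive definiteness of `M` forces
`v = 0`, and for a positive semidefinite `K` the identity `x·Kx = 0` forces `Kx = 0`.
Uniqueness follows by applying this to the difference of two solutions.
-/

namespace Matrix

variable {n R : Type*} [Fintype n]

theorem star_sumElim_dotProduct_fromBlocks_mulVec_sumElim [Ring R] [StarRing R]
    (P K Q : Matrix n n R) (v u : n → R) :
    star (Sum.elim v u) ⬝ᵥ fromBlocks (P + K) K K (K + Q) *ᵥ Sum.elim v u =
      star v ⬝ᵥ P *ᵥ v + star (v + u) ⬝ᵥ K *ᵥ (v + u) + star u ⬝ᵥ Q *ᵥ u := by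
  simp only [fromBlocks_mulVec, Sum.elim_comp_inl, Sum.elim_comp_inr, Function.star_sumElim,
    sumElim_dotProduct_sumElim, add_mulVec, mulVec_add, dotProduct_add, star_add, add_dotProduct]
  abel

open scoped ComplexOrder in
theorem fromBlocks_mulVec_sumElim_eq_zero_iff {𝕜 : Type*} [RCLike 𝕜] {P K Q : Matrix n n 𝕜}
    (hP : P.PosDef) (hK : K.PosSemidef) (hQ : Q.PosSemidef) (v u : n → 𝕜) :
    fromBlocks (P + K) K K (K + Q) *ᵥ Sum.elim v u = 0 ↔ v = 0 ∧ K *ᵥ u = 0 ∧ Q *ᵥ u = 0 := by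
  constructor
  · intro h
    have hform := star_sumElim_dotProduct_fromBlocks_mulVec_sumElim P K Q v u
    rw [h, dotProduct_zero, eq_comm,
      add_eq_zero_iff_of_nonneg (add_nonneg (hP.posSemidef.dotProduct_mulVec_nonneg v)
        (hK.dotProduct_mulVec_nonneg _)) (hQ.dotProduct_mulVec_nonneg u),
      add_eq_zero_iff_of_nonneg (hP.posSemidef.dotProduct_mulVec_nonneg v)
        (hK.dotProduct_mulVec_nonneg _)] at hform
    obtain ⟨⟨hPv, hKvu⟩, hQu⟩ := hform
    have hv : v = 0 := by
      by_contra hv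
      exact (hP.dotProduct_mulVec_pos hv).ne' hPv
    subst hv
    rw [zero_add, hK.dotProduct_mulVec_zero_iff] at hKvu
    exact ⟨rfl, hKvu, (hQ.dotProduct_mulVec_zero_iff u).1 hQu⟩
  · rintro ⟨rfl, hKu, hQu⟩
    simp [fromBlocks_mulVec, add_mulVec, hKu, hQu]

end Matrix

/-- Kernel of the bidomain block matrix `A = [[αM + K₁, K₁], [K₁, K₁ + K_e]]`:
`(v,u) ∈ ker A ↔ v = 0 ∧ K₁ u = 0 ∧ K_e u = 0`. In particular, if
`ker K₁ ∩ ker K_e` consists only of constant vectors, the discrete bidomain solution is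
unique up to adding a constant to the second component. -/
theorem bidomain_block_kernel (N : ℕ)
    (M K₁ Ke : Matrix (Fin N) (Fin N) ℝ)
    (hM : M.PosDef) (hK₁ : K₁.PosSemidef) (hKe : Ke.PosSemidef)
    (α : ℝ) (hα : 0 < α)
    (A : Matrix (Fin N ⊕ Fin N) (Fin N ⊕ Fin N) ℝ)
    (hA : A = Matrix.fromBlocks (α • M + K₁) K₁ K₁ (K₁ + Ke)) :
    (∀ v u : Fin N → ℝ,
      A *ᵥ Sum.elim v u = 0 ↔ v = 0 ∧ K₁ *ᵥ u = 0 ∧ Ke *ᵥ u = 0) ∧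
    ((∀ u : Fin N → ℝ, K₁ *ᵥ u = 0 → Ke *ᵥ u = 0 → ∃ c : ℝ, u = fun _ => c) →
      ∀ (b : Fin N ⊕ Fin N → ℝ) (v u v' u' : Fin N → ℝ),
        A *ᵥ Sum.elim v u = b → A *ᵥ Sum.elim v' u' = b →
        v' = v ∧ ∃ c : ℝ, u' = u + fun _ => c) := by
  subst hA
  have hker := fromBlocks_mulVec_sumElim_eq_zero_iff (hM.smul hα) hK₁ hKe
  refine ⟨hker, fun hconst b v u v' u' h h' => ?_⟩
  obtain ⟨hv, hK₁u, hKeu⟩ := (hker (v' - v) (u' - u)).1 <| by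
    rw [Sum.elim_sub_sub, mulVec_sub, h, h', sub_self]
  obtain ⟨c, hc⟩ := hconst _ hK₁u hKeu
  exact ⟨sub_eq_zero.1 hv, c, by rw [← hc, add_sub_cancel]⟩
end

section
/- For fixed w > 0, the function V ↦ I_ion(V, w) has three distinct real zeros if and only if w > 4 τ_in / (τ_out (V_max − V_min)²); the two zeros other than V_min are the roots of the quadratic (w/τ_in)(V−V_min)(V_max−V) = 1/τ_out, which lie strictly between V_min and V_max when they exist. -/
/-- For fixed `w > 0`, the Mitchell–Schaeffer current `V ↦ I_ion(V,w)` has three distinct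
real zeros iff `w > 4τ_in/(τ_out (V_max−V_min)²)`; every zero other than `V_min` is a root
of the quadratic `(w/τ_in)(V−V_min)(V_max−V) = 1/τ_out` and lies strictly between
`V_min` and `V_max`. -/
theorem mitchell_schaeffer_bistability
    (τin τout Vmin Vmax : ℝ) (hτin : 0 < τin) (hτout : 0 < τout) (hV : Vmin < Vmax)
    (Iion : ℝ → ℝ → ℝ)
    (hIion : ∀ V w, Iion V w
      = -(w / τin) * ((V - Vmin) ^ 2 * (Vmax - V)) / (Vmax - Vmin)
        + (1 / τout) * ((V - Vmin) / (Vmax - Vmin)))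
    (w : ℝ) (hw : 0 < w) :
    ((∃ x y z : ℝ, x ≠ y ∧ x ≠ z ∧ y ≠ z ∧
        Iion x w = 0 ∧ Iion y w = 0 ∧ Iion z w = 0) ↔
      4 * τin / (τout * (Vmax - Vmin) ^ 2) < w) ∧
    (∀ V : ℝ, Iion V w = 0 → V ≠ Vmin →
      Vmin < V ∧ V < Vmax ∧ (w / τin) * ((V - Vmin) * (Vmax - V)) = 1 / τout) := by
  have hΔ : 0 < Vmax - Vmin := sub_pos.mpr hV
  have hΔ' : (Vmax - Vmin) ≠ 0 := ne_of_gt hΔ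
  have hτin' : τin ≠ 0 := ne_of_gt hτin
  have hτout' : τout ≠ 0 := ne_of_gt hτout
  have hw' : w ≠ 0 := ne_of_gt hw
  have hfac : ∀ V : ℝ, Iion V w
      = (V - Vmin) * (τin - w * τout * ((V - Vmin) * (Vmax - V)))
          / (τin * τout * (Vmax - Vmin)) := by
    intro V
    rw [hIion]
    field_simp
    ring
  have key : ∀ V : ℝ, Iion V w = 0 ↔
      (V = Vmin ∨ w * τout * ((V - Vmin) * (Vmax - V)) = τin) := by
    intro V
    rw [hfac V, div_eq_zero_iff]
    constructor
    · rintro (h | h)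
      · rcases mul_eq_zero.mp h with h | h
        · exact Or.inl (by linarith [sub_eq_zero.mp h])
        · exact Or.inr (by linarith [sub_eq_zero.mp h])
      · exact absurd h (by positivity)
    · rintro (h | h)
      · left; rw [h]; ring
      · left
        have : τin - w * τout * ((V - Vmin) * (Vmax - V)) = 0 := by linarith
        rw [this]; ring
  have quad2 : ∀ u v : ℝ, u ≠ v →
      w * τout * ((u - Vmin) * (Vmax - u)) = τin →
      w * τout * ((v - Vmin) * (Vmax - v)) = τin →
      4 * τin / (τout * (Vmax - Vmin) ^ 2) < w := by
    intro u v huv h1 h2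
    have huv' : u - v ≠ 0 := sub_ne_zero.mpr huv
    have hsum : u + v = Vmax + Vmin := by
      have h3 : (w * τout) * ((u - v) * (Vmax + Vmin - u - v)) = 0 := by
        linear_combination h1 - h2
      have h4 : (u - v) * (Vmax + Vmin - u - v) = 0 := by
        have hwt : (w * τout) ≠ 0 := by positivity
        exact (mul_eq_zero.mp h3).resolve_left hwt
      have h5 : Vmax + Vmin - u - v = 0 := (mul_eq_zero.mp h4).resolve_left huv'
      linarith
    rw [div_lt_iff₀ (by positivity)]
    have hsq : 0 < (u - v) ^ 2 := by positivity
    nlinarith [mul_pos (mul_pos hw hτout) hsq, h1, hsum]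
  constructor
  · constructor
    · rintro ⟨x, y, z, hxy, hxz, hyz, h1, h2, h3⟩
      rcases (key x).1 h1 with hx | hx <;> rcases (key y).1 h2 with hy | hy <;>
        rcases (key z).1 h3 with hz | hz
      · exact absurd (hx.trans hy.symm) hxy
      · exact absurd (hx.trans hy.symm) hxy
      · exact absurd (hx.trans hz.symm) hxz
      · exact quad2 y z hyz hy hz
      · exact absurd (hy.trans hz.symm) hyz
      · exact quad2 x z hxz hx hz
      · exact quad2 x y hxy hx hy
      · exact quad2 x y hxy hx hy
    · intro h
      have hbig : 4 * τin < w * (τout * (Vmax - Vmin) ^ 2) := by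
        rw [div_lt_iff₀ (by positivity)] at h
        linarith
      set d : ℝ := (Vmax - Vmin) / 2 with hd_def
      have hd : 0 < d := by positivity
      set c : ℝ := τin / (w * τout) with hc_def
      have hc : 0 < c := by positivity
      have hcd : c < d ^ 2 := by
        rw [hc_def, hd_def, div_lt_iff₀ (by positivity)]
        nlinarith [hbig]
      set s : ℝ := Real.sqrt (d ^ 2 - c) with hs_def
      have hs2 : s ^ 2 = d ^ 2 - c := Real.sq_sqrt (by linarith)
      have hs : 0 < s := Real.sqrt_pos.mpr (by linarith)
      have hsd : s < d := by nlinarith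
      refine ⟨Vmin, (Vmin + Vmax) / 2 - s, (Vmin + Vmax) / 2 + s, ?_, ?_, ?_, ?_, ?_, ?_⟩
      · have : Vmin < (Vmin + Vmax) / 2 - s := by
          have : (Vmin + Vmax) / 2 - s - Vmin = d - s := by rw [hd_def]; ring
          linarith
        exact ne_of_lt this
      · have : Vmin < (Vmin + Vmax) / 2 + s := by
          have : (Vmin + Vmax) / 2 + s - Vmin = d + s := by rw [hd_def]; ring
          linarith
        exact ne_of_lt this
      · intro hcontra
        have hs0 : s = 0 := by linarith
        linarith
      · exact (key Vmin).2 (Or.inl rfl)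
      · refine (key _).2 (Or.inr ?_)
        have hprod : ((Vmin + Vmax) / 2 - s - Vmin) * (Vmax - ((Vmin + Vmax) / 2 - s))
            = d ^ 2 - s ^ 2 := by rw [hd_def]; ring
        rw [hprod, hs2]
        have : d ^ 2 - (d ^ 2 - c) = c := by ring
        rw [this, hc_def]
        field_simp
      · refine (key _).2 (Or.inr ?_)
        have hprod : ((Vmin + Vmax) / 2 + s - Vmin) * (Vmax - ((Vmin + Vmax) / 2 + s))
            = d ^ 2 - s ^ 2 := by rw [hd_def]; ring
        rw [hprod, hs2]
        have : d ^ 2 - (d ^ 2 - c) = c := by ring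
        rw [this, hc_def]
        field_simp
  · intro V hz hne
    have h2 := ((key V).1 hz).resolve_left hne
    have hp : 0 < (V - Vmin) * (Vmax - V) := by
      have hwt : 0 < w * τout := by positivity
      nlinarith
    have h1 : Vmin < V := by
      by_contra hle
      push_neg at hle
      nlinarith
    have h2' : V < Vmax := by
      by_contra hle
      push_neg at hle
      nlinarith
    refine ⟨h1, h2', ?_⟩
    field_simp
    linear_combination h2
end

section
/- For the gating ODE w′ = −g(V_m(t), w) of the Mitchell–Schaeffer model (with V_m any measurable function of time), the interval [0, 1/(V_max−V_min)²] is positively invariant: if 0 ≤ w(0) ≤ 1/(V_max−V_min)², then 0 ≤ w(t) ≤ 1/(V_max−V_min)² for all t ≥ 0. -/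
/-!
Both bounds are barrier arguments. The right-hand side `-g(V, w)` is nonnegative when `w ≤ 0` and
nonpositive when `w ≥ 1/(V_max−V_min)²`, whatever the value of `V`, because `g(V, w)` always lies
between the two branches `w/τ_close` and `(w − 1/(V_max−V_min)²)/τ_open`, each of which has the
required sign there. A solution therefore cannot leave the interval through either end point.
-/

open Set Filter Topology

theorem image_le_of_deriv_nonpos_above {f f' : ℝ → ℝ} {a b : ℝ}
    (hf : ∀ t, a ≤ t → HasDerivAt f (f' t) t) (ha : f a ≤ b)
    (hbound : ∀ t, a ≤ t → b ≤ f t → f' t ≤ 0) :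
    ∀ t, a ≤ t → f t ≤ b := by
  intro t ht
  -- Fence `f` by the lines `b + δ (x - a)`, `δ > 0`, which `f` cannot cross, then let `δ → 0`.
  have fenced : ∀ δ > 0, f t ≤ b + δ * (t - a) := by
    intro δ hδ
    refine image_le_of_deriv_right_lt_deriv_boundary' (B := fun x => b + δ * (x - a))
      (fun x hx => (hf x hx.1).continuousAt.continuousWithinAt)
      (fun x hx => (hf x hx.1).hasDerivWithinAt) (by simpa using ha) (by fun_prop)
      (fun x _ => (((hasDerivAt_id x).sub_const a).const_mul δ).const_add b
        |>.hasDerivWithinAt.congr_deriv (mul_one δ))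
      (fun x hx hfx => (hbound x hx.1 ?_).trans_lt hδ) ⟨ht, le_rfl⟩
    rw [hfx]
    exact le_add_of_nonneg_right (mul_nonneg hδ.le (sub_nonneg.2 hx.1))
  have hlim : Tendsto (fun δ : ℝ => b + δ * (t - a)) (𝓝[>] 0) (𝓝 b) :=
    tendsto_nhdsWithin_of_tendsto_nhds (by simpa using (Continuous.tendsto (by fun_prop) 0 :
      Tendsto (fun δ : ℝ => b + δ * (t - a)) (𝓝 0) (𝓝 (b + 0 * (t - a)))))
  exact ge_of_tendsto hlim (eventually_nhdsWithin_of_forall fenced)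

theorem le_image_of_deriv_nonneg_below {f f' : ℝ → ℝ} {a b : ℝ}
    (hf : ∀ t, a ≤ t → HasDerivAt f (f' t) t) (ha : b ≤ f a)
    (hbound : ∀ t, a ≤ t → f t ≤ b → 0 ≤ f' t) :
    ∀ t, a ≤ t → b ≤ f t := by
  intro t ht
  have := image_le_of_deriv_nonpos_above (f := -f) (f' := -f') (b := -b) (fun s hs => (hf s hs).neg)
    (neg_le_neg ha) (fun s hs hfs => neg_nonpos.2 (hbound s hs (neg_le_neg_iff.1 hfs))) t ht
  exact neg_le_neg_iff.1 this

theorem mem_uIcc_of_switch {g : ℝ → ℝ → ℝ} {p q : ℝ → ℝ} {c : ℝ}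
    (hlt : ∀ V w, V < c → g V w = p w) (hgt : ∀ V w, c < V → g V w = q w)
    (hc : ∀ w, g c w ∈ uIcc (q w) (p w)) (V w : ℝ) :
    g V w ∈ uIcc (q w) (p w) := by
  rcases lt_trichotomy V c with hV | rfl | hV
  · rw [hlt V w hV]; exact right_mem_uIcc
  · exact hc w
  · rw [hgt V w hV]; exact left_mem_uIcc

theorem mitchell_schaeffer_gate_invariant_general
    (τopen τclose Vgate Vmin Vmax : ℝ)
    (hτopen : 0 < τopen) (hτclose : 0 < τclose)
    (g : ℝ → ℝ → ℝ)
    (hgopen : ∀ V w, V < Vgate → g V w = w / τopen - 1 / (τopen * (Vmax - Vmin) ^ 2))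
    (hgclose : ∀ V w, Vgate < V → g V w = w / τclose)
    (hggate : ∀ w : ℝ, g Vgate w ∈
      Set.uIcc (w / τclose) (w / τopen - 1 / (τopen * (Vmax - Vmin) ^ 2)))
    (Vm w : ℝ → ℝ)
    (hode : ∀ t : ℝ, 0 ≤ t → HasDerivAt w (-(g (Vm t) (w t))) t)
    (h0 : 0 ≤ w 0 ∧ w 0 ≤ 1 / (Vmax - Vmin) ^ 2) :
    ∀ t : ℝ, 0 ≤ t → 0 ≤ w t ∧ w t ≤ 1 / (Vmax - Vmin) ^ 2 := by
  set M := 1 / (Vmax - Vmin) ^ 2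
  have hM : 0 ≤ M := by positivity
  have hopen : ∀ u, u / τopen - 1 / (τopen * (Vmax - Vmin) ^ 2) = (u - M) / τopen := by
    intro u; rw [sub_div, div_div, mul_comm]
  have hg := mem_uIcc_of_switch hgopen hgclose hggate
  simp only [hopen] at hg
  have hg_nonpos : ∀ V u, u ≤ 0 → g V u ≤ 0 := fun V u hu =>
    (hg V u).2.trans (max_le (div_nonpos_of_nonpos_of_nonneg hu hτclose.le)
      (div_nonpos_of_nonpos_of_nonneg (by linarith) hτopen.le))
  have hg_nonneg : ∀ V u, M ≤ u → 0 ≤ g V u := fun V u hu =>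
    (le_min (div_nonneg (hM.trans hu) hτclose.le) (div_nonneg (sub_nonneg.2 hu) hτopen.le)).trans
      (hg V u).1
  intro t ht
  exact ⟨le_image_of_deriv_nonneg_below hode h0.1
      (fun s _ hs => neg_nonneg.2 (hg_nonpos _ _ hs)) t ht,
    image_le_of_deriv_nonpos_above hode h0.2 (fun s _ hs => neg_nonpos.2 (hg_nonneg _ _ hs)) t ht⟩

/-- Positive invariance of `[0, 1/(V_max−V_min)²]` for the Mitchell–Schaeffer gating ODE
`w′ = −g(V_m(t), w)`, where `g(V,w) = w/τ_open − 1/(τ_open (V_max−V_min)²)` for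
`V < V_gate`, `g(V,w) = w/τ_close` for `V > V_gate`, and `g(V_gate, w)` lies between these
two values. -/
theorem mitchell_schaeffer_gate_invariant
    (τopen τclose Vgate Vmin Vmax : ℝ)
    (hτopen : 0 < τopen) (hτclose : 0 < τclose) (hV : Vmin < Vmax)
    (g : ℝ → ℝ → ℝ)
    (hgopen : ∀ V w, V < Vgate → g V w = w / τopen - 1 / (τopen * (Vmax - Vmin) ^ 2))
    (hgclose : ∀ V w, Vgate < V → g V w = w / τclose)
    (hggate : ∀ w : ℝ, g Vgate w ∈
      Set.uIcc (w / τclose) (w / τopen - 1 / (τopen * (Vmax - Vmin) ^ 2)))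
    (Vm w : ℝ → ℝ) (hVm : Measurable Vm)
    (hode : ∀ t : ℝ, 0 ≤ t → HasDerivAt w (-(g (Vm t) (w t))) t)
    (h0 : 0 ≤ w 0 ∧ w 0 ≤ 1 / (Vmax - Vmin) ^ 2) :
    ∀ t : ℝ, 0 ≤ t → 0 ≤ w t ∧ w t ≤ 1 / (Vmax - Vmin) ^ 2 :=
  mitchell_schaeffer_gate_invariant_general τopen τclose Vgate Vmin Vmax hτopen hτclose g hgopen
    hgclose hggate Vm w hode h0
end
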